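/- Let n ≥ 2, l ≥ 2, N ≥ 1 be integers and set c_{2l} = (1·3·5⋯(2l−1))/(n(n+2)⋯(n+2l−2)). (i) If x₁,…,x_N ∈ 𝕊^{n-1} and W₁,…,W_N > 0 satisfy ∑_{k=1}^N W_k φ(x_k) = ∫_{𝕊^{n-1}} φ dσ for every real polynomial φ homogeneous of degree 2l on ℝⁿ, then the linear map J : ℝⁿ → ℝ^N with coordinates J(u)_k = (W_k/c_{2l})^{1/(2l)}·⟨x_k, u⟩ is a nondegenerate isometric embedding of ℓ²(n) into ℓ^{2l}(N), i.e. ‖J(u)‖_{2l} = ‖u‖₂ for all u ∈ ℝⁿ and no coordinate functional u ↦ J(u)_k is identically zero. (ii) Conversely, if J : ℝⁿ → ℝ^N is a linear map with ‖J(u)‖_{2l} = ‖u‖₂ for all u ∈ ℝⁿ and no coordinate functional identically zero, then there exist x₁,…,x_N ∈ 𝕊^{n-1} and W₁,…,W_N > 0 such that ∑_{k=1}^N W_k φ(x_k) = ∫_{𝕊^{n-1}} φ dσ for every real polynomial φ homogeneous of degree 2l on ℝⁿ. -/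

import Mathlib

open MeasureTheory Finset
open scoped RealInnerProductSpace

section CubAux

variable {n : ℕ}

lemma cub_ae_sphere (σ : Measure (EuclideanSpace ℝ (Fin n)))
    (hsupp : σ (Metric.sphere (0 : EuclideanSpace ℝ (Fin n)) 1)ᶜ = 0) :
    ∀ᵐ ω ∂σ, ‖ω‖ = 1 := by
  rw [MeasureTheory.ae_iff]
  refine measure_mono_null ?_ hsupp
  intro ω h
  simpa [Metric.mem_sphere, dist_zero_right] using h

lemma cub_integrable_cont (σ : Measure (EuclideanSpace ℝ (Fin n))) [IsProbabilityMeasure σ]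
    (hsupp : σ (Metric.sphere (0 : EuclideanSpace ℝ (Fin n)) 1)ᶜ = 0)
    {f : EuclideanSpace ℝ (Fin n) → ℝ} (hf : Continuous f) : Integrable f σ := by
  obtain ⟨C, hC⟩ := (isCompact_sphere (0 : EuclideanSpace ℝ (Fin n)) 1).exists_bound_of_continuousOn
    hf.continuousOn
  refine Integrable.mono' (integrable_const C) hf.aestronglyMeasurable ?_
  filter_upwards [cub_ae_sphere σ hsupp] with ω hω
  exact hC ω (by simpa [Metric.mem_sphere, dist_zero_right] using hω)

lemma cub_integral_comp_isometry (σ : Measure (EuclideanSpace ℝ (Fin n)))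
    (hinv : ∀ g : EuclideanSpace ℝ (Fin n) ≃ₗᵢ[ℝ] EuclideanSpace ℝ (Fin n),
      MeasurePreserving g σ σ)
    (g : EuclideanSpace ℝ (Fin n) ≃ₗᵢ[ℝ] EuclideanSpace ℝ (Fin n))
    (f : EuclideanSpace ℝ (Fin n) → ℝ) : ∫ ω, f (g ω) ∂σ = ∫ ω, f ω ∂σ :=
  (hinv g).integral_comp g.toHomeomorph.measurableEmbedding f

lemma cub_integral_inner_pow_congr (σ : Measure (EuclideanSpace ℝ (Fin n)))
    (hinv : ∀ g : EuclideanSpace ℝ (Fin n) ≃ₗᵢ[ℝ] EuclideanSpace ℝ (Fin n),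
      MeasurePreserving g σ σ)
    (m : ℕ) (u v : EuclideanSpace ℝ (Fin n)) (h : ‖u‖ = ‖v‖) :
    ∫ ω, ⟪ω, u⟫ ^ m ∂σ = ∫ ω, ⟪ω, v⟫ ^ m ∂σ := by
  set g := Submodule.reflection (Submodule.span ℝ {u - v})ᗮ with hgdef
  have hg : g u = v := Submodule.reflection_sub h
  calc ∫ ω, ⟪ω, u⟫ ^ m ∂σ = ∫ ω, ⟪g ω, g u⟫ ^ m ∂σ := by
        simp [LinearIsometryEquiv.inner_map_map]
    _ = ∫ ω, ⟪ω, v⟫ ^ m ∂σ := by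
        rw [hg]; exact cub_integral_comp_isometry σ hinv g (fun ω => ⟪ω, v⟫ ^ m)

lemma cub_integral_inner_pow (σ : Measure (EuclideanSpace ℝ (Fin n))) [IsProbabilityMeasure σ]
    (hinv : ∀ g : EuclideanSpace ℝ (Fin n) ≃ₗᵢ[ℝ] EuclideanSpace ℝ (Fin n),
      MeasurePreserving g σ σ)
    (m : ℕ) (e : EuclideanSpace ℝ (Fin n)) (he : ‖e‖ = 1) (u : EuclideanSpace ℝ (Fin n)) :
    ∫ ω, ⟪ω, u⟫ ^ (2 * m) ∂σ = (∫ ω, ⟪ω, e⟫ ^ (2 * m) ∂σ) * ‖u‖ ^ (2 * m) := by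
  rcases eq_or_ne u 0 with rfl | hu
  · rcases Nat.eq_zero_or_pos m with rfl | hm
    · simp
    · have h2m : 2 * m ≠ 0 := by omega
      simp [zero_pow h2m]
  · have hnu : ‖u‖ ≠ 0 := norm_ne_zero_iff.mpr hu
    set v : EuclideanSpace ℝ (Fin n) := ‖u‖⁻¹ • u with hv
    have hvn : ‖v‖ = 1 := by
      rw [hv, norm_smul, norm_inv, norm_norm, inv_mul_cancel₀ hnu]
    have huv : u = ‖u‖ • v := by rw [hv, smul_smul, mul_inv_cancel₀ hnu, one_smul]
    calc ∫ ω, ⟪ω, u⟫ ^ (2 * m) ∂σ = ∫ ω, ‖u‖ ^ (2 * m) * ⟪ω, v⟫ ^ (2 * m) ∂σ := by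
          congr 1; funext ω
          conv_lhs => rw [huv]
          rw [real_inner_smul_right, mul_pow]
      _ = ‖u‖ ^ (2 * m) * ∫ ω, ⟪ω, v⟫ ^ (2 * m) ∂σ := by rw [integral_const_mul]
      _ = (∫ ω, ⟪ω, e⟫ ^ (2 * m) ∂σ) * ‖u‖ ^ (2 * m) := by
          rw [cub_integral_inner_pow_congr σ hinv _ v e (by rw [hvn, he]), mul_comm]

lemma cub_mixed_moment (σ : Measure (EuclideanSpace ℝ (Fin n))) [IsProbabilityMeasure σ]
    (hsupp : σ (Metric.sphere (0 : EuclideanSpace ℝ (Fin n)) 1)ᶜ = 0)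
    (hinv : ∀ g : EuclideanSpace ℝ (Fin n) ≃ₗᵢ[ℝ] EuclideanSpace ℝ (Fin n),
      MeasurePreserving g σ σ)
    (l : ℕ) (u v : EuclideanSpace ℝ (Fin n)) (hu : ‖u‖ = 1) (hv : ‖v‖ = 1)
    (huv : ⟪u, v⟫ = 0) :
    (2 * (l : ℝ) + 1) * ∫ ω, ⟪ω, v⟫ ^ 2 * ⟪ω, u⟫ ^ (2 * l) ∂σ
      = ∫ ω, ⟪ω, u⟫ ^ (2 * (l + 1)) ∂σ := by
  set m := ∫ ω, ⟪ω, u⟫ ^ (2 * (l + 1)) ∂σ with hm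
  set B : ℕ → ℝ := fun j => ∫ ω, ⟪ω, v⟫ ^ j * ⟪ω, u⟫ ^ (2 * l + 2 - j) ∂σ with hB
  have hint : ∀ a b : ℕ, Integrable (fun ω : EuclideanSpace ℝ (Fin n) =>
      ⟪ω, v⟫ ^ a * ⟪ω, u⟫ ^ b) σ := fun a b =>
    cub_integrable_cont σ hsupp
      (((continuous_id.inner continuous_const).pow a).mul
        ((continuous_id.inner continuous_const).pow b))
  have hnormsq : ∀ t : ℝ, ‖u + t • v‖ ^ 2 = 1 + t ^ 2 := by
    intro t
    rw [norm_add_sq_real, real_inner_smul_right, huv, norm_smul, hu, hv]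
    simp [mul_pow, sq_abs]
  have key : ∀ t : ℝ,
      ∑ j ∈ range (2 * l + 2 + 1), (((2 * l + 2).choose j : ℝ) * B j) * t ^ j
        = ∑ i ∈ range (l + 1 + 1), (m * ((l + 1).choose i : ℝ)) * t ^ (2 * i) := by
    intro t
    have h1 : ∀ ω : EuclideanSpace ℝ (Fin n), ⟪ω, u + t • v⟫ ^ (2 * l + 2)
        = ∑ j ∈ range (2 * l + 2 + 1),
            (((2 * l + 2).choose j : ℝ) * (⟪ω, v⟫ ^ j * ⟪ω, u⟫ ^ (2 * l + 2 - j))) * t ^ j := by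
      intro ω
      rw [inner_add_right, real_inner_smul_right, add_comm (⟪ω, u⟫) _, add_pow]
      refine Finset.sum_congr rfl fun j hj => ?_
      rw [mul_pow]
      ring
    have h2 : ∑ j ∈ range (2 * l + 2 + 1), (((2 * l + 2).choose j : ℝ) * B j) * t ^ j
        = ∫ ω, ⟪ω, u + t • v⟫ ^ (2 * l + 2) ∂σ := by
      have : ∀ j : ℕ, (((2 * l + 2).choose j : ℝ) * B j) * t ^ j
          = ∫ ω, (((2 * l + 2).choose j : ℝ) * (⟪ω, v⟫ ^ j * ⟪ω, u⟫ ^ (2 * l + 2 - j))) * t ^ j ∂σ := by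
        intro j
        rw [integral_mul_const, integral_const_mul]
      rw [Finset.sum_congr rfl fun j _ => this j, ← integral_finset_sum]
      · congr 1; funext ω; rw [← h1 ω]
      · intro j _
        exact (((hint j (2 * l + 2 - j)).const_mul _).mul_const _)
    have h3 : ∫ ω, ⟪ω, u + t • v⟫ ^ (2 * l + 2) ∂σ = m * (1 + t ^ 2) ^ (l + 1) := by
      have e1 : 2 * l + 2 = 2 * (l + 1) := by omega
      rw [e1, cub_integral_inner_pow σ hinv (l + 1) u hu, ← hm, pow_mul, hnormsq]
    have h4 : m * (1 + t ^ 2) ^ (l + 1)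
        = ∑ i ∈ range (l + 1 + 1), (m * ((l + 1).choose i : ℝ)) * t ^ (2 * i) := by
      rw [add_comm (1 : ℝ) _, add_pow, Finset.mul_sum]
      refine Finset.sum_congr rfl fun i hi => ?_
      rw [← pow_mul]
      ring
    rw [h2, h3, h4]
  set p : Polynomial ℝ :=
    ∑ j ∈ range (2 * l + 2 + 1), Polynomial.C (((2 * l + 2).choose j : ℝ) * B j) * Polynomial.X ^ j with hp
  set q : Polynomial ℝ :=
    ∑ i ∈ range (l + 1 + 1), Polynomial.C (m * ((l + 1).choose i : ℝ)) * Polynomial.X ^ (2 * i) with hq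
  have hpq : p = q := by
    apply Polynomial.funext
    intro t
    simp only [hp, hq, Polynomial.eval_finset_sum, Polynomial.eval_mul, Polynomial.eval_C,
      Polynomial.eval_pow, Polynomial.eval_X]
    exact key t
  have hcoeff : ((2 * l + 2).choose 2 : ℝ) * B 2 = m * ((l + 1).choose 1 : ℝ) := by
    have hpc : p.coeff 2 = ((2 * l + 2).choose 2 : ℝ) * B 2 := by
      rw [hp, Polynomial.finset_sum_coeff]
      rw [Finset.sum_eq_single 2]
      · rw [Polynomial.coeff_C_mul, Polynomial.coeff_X_pow]; simp
      · intro j _ hj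
        rw [Polynomial.coeff_C_mul, Polynomial.coeff_X_pow]
        simp [Ne.symm hj]
      · intro h; exact absurd (Finset.mem_range.mpr (by omega)) h
    have hqc : q.coeff 2 = m * ((l + 1).choose 1 : ℝ) := by
      rw [hq, Polynomial.finset_sum_coeff]
      rw [Finset.sum_eq_single 1]
      · rw [Polynomial.coeff_C_mul, Polynomial.coeff_X_pow]; simp
      · intro i _ hi
        have h2i : (2 : ℕ) ≠ 2 * i := by omega
        rw [Polynomial.coeff_C_mul, Polynomial.coeff_X_pow]
        simp [h2i]
      · intro h; exact absurd (Finset.mem_range.mpr (by omega)) h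
    rw [← hpc, hpq, hqc]
  have hch : ((2 * l + 2).choose 2 : ℕ) = (l + 1) * (2 * l + 1) := by
    rw [Nat.choose_two_right]
    have h1 : 2 * l + 2 - 1 = 2 * l + 1 := by omega
    rw [h1]
    have h2 : (2 * l + 2) * (2 * l + 1) = 2 * ((l + 1) * (2 * l + 1)) := by ring
    rw [h2, Nat.mul_div_cancel_left _ (by norm_num)]
  have hch1 : ((l + 1).choose 1 : ℕ) = l + 1 := Nat.choose_one_right _
  rw [hch, hch1] at hcoeff
  push_cast at hcoeff
  have hl1 : ((l : ℝ) + 1) ≠ 0 := by positivity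
  have hB2 : B 2 = ∫ ω, ⟪ω, v⟫ ^ 2 * ⟪ω, u⟫ ^ (2 * l) ∂σ := by
    have h22 : 2 * l + 2 - 2 = 2 * l := by omega
    simp only [hB, h22]
  rw [← hB2]
  have h5 : ((l : ℝ) + 1) * ((2 * (l : ℝ) + 1) * B 2) = ((l : ℝ) + 1) * m := by
    rw [← mul_assoc, hcoeff]; ring
  exact mul_left_cancel₀ hl1 h5

lemma cub_moment_formula (hn : 2 ≤ n) (σ : Measure (EuclideanSpace ℝ (Fin n)))
    [IsProbabilityMeasure σ]
    (hsupp : σ (Metric.sphere (0 : EuclideanSpace ℝ (Fin n)) 1)ᶜ = 0)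
    (hinv : ∀ g : EuclideanSpace ℝ (Fin n) ≃ₗᵢ[ℝ] EuclideanSpace ℝ (Fin n),
      MeasurePreserving g σ σ)
    (l : ℕ) (u : EuclideanSpace ℝ (Fin n)) :
    ∫ ω, ⟪ω, u⟫ ^ (2 * l) ∂σ
      = (∏ j ∈ Finset.range l, ((2 * (j : ℝ) + 1) / ((n : ℝ) + 2 * j))) * ‖u‖ ^ (2 * l) := by
  have hnpos : 0 < n := by omega
  set i0 : Fin n := ⟨0, hnpos⟩ with hi0
  set e : Fin n → EuclideanSpace ℝ (Fin n) := fun i => EuclideanSpace.single i 1 with hedef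
  have he : ∀ i, ‖e i‖ = 1 := fun i => by
    simp [hedef, EuclideanSpace.norm_single]
  set M : ℕ → ℝ := fun m => ∫ ω, ⟪ω, e i0⟫ ^ (2 * m) ∂σ with hM
  have hMa : ∀ (m : ℕ) (w : EuclideanSpace ℝ (Fin n)),
      ∫ ω, ⟪ω, w⟫ ^ (2 * m) ∂σ = M m * ‖w‖ ^ (2 * m) :=
    fun m w => cub_integral_inner_pow σ hinv m (e i0) (he i0) w
  have hM0 : M 0 = 1 := by simp [hM]
  have hint : ∀ (w w' : EuclideanSpace ℝ (Fin n)) (a b : ℕ),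
      Integrable (fun ω : EuclideanSpace ℝ (Fin n) => ⟪ω, w⟫ ^ a * ⟪ω, w'⟫ ^ b) σ :=
    fun w w' a b => cub_integrable_cont σ hsupp
      (((continuous_id.inner continuous_const).pow a).mul
        ((continuous_id.inner continuous_const).pow b))
  have horth : ∀ i : Fin n, i ≠ i0 → ⟪e i0, e i⟫ = 0 := by
    intro i hi
    simp [hedef, EuclideanSpace.inner_single_right, EuclideanSpace.single_apply,
      (Ne.symm hi : i0 ≠ i)]
  have hae : ∀ᵐ ω ∂σ, ∑ i : Fin n, ⟪ω, e i⟫ ^ 2 = 1 := by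
    filter_upwards [cub_ae_sphere σ hsupp] with ω hω
    have h1 : ∀ i, ⟪ω, e i⟫ = ω i := fun i => by
      simp [hedef, EuclideanSpace.inner_single_right]
    calc ∑ i, ⟪ω, e i⟫ ^ 2 = ∑ i, ω i * ω i := by
          refine Finset.sum_congr rfl fun i _ => ?_
          rw [h1 i, sq]
      _ = ⟪ω, ω⟫ := by
          simp only [PiLp.inner_apply, RCLike.inner_apply, conj_trivial]
      _ = ‖ω‖ ^ 2 := real_inner_self_eq_norm_sq ω
      _ = 1 := by rw [hω]; norm_num
  have hrec : ∀ m : ℕ, ((n : ℝ) + 2 * m) * M (m + 1) = (2 * (m : ℝ) + 1) * M m := by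
    intro m
    have step1 : M m = ∑ i : Fin n, ∫ ω, ⟪ω, e i⟫ ^ 2 * ⟪ω, e i0⟫ ^ (2 * m) ∂σ := by
      have h2 : M m = ∫ ω, (∑ i : Fin n, ⟪ω, e i⟫ ^ 2) * ⟪ω, e i0⟫ ^ (2 * m) ∂σ := by
        rw [hM]
        refine integral_congr_ae ?_
        filter_upwards [hae] with ω hω
        rw [hω, one_mul]
      rw [h2]
      have h3 : (fun ω : EuclideanSpace ℝ (Fin n) =>
          (∑ i : Fin n, ⟪ω, e i⟫ ^ 2) * ⟪ω, e i0⟫ ^ (2 * m))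
          = fun ω => ∑ i : Fin n, ⟪ω, e i⟫ ^ 2 * ⟪ω, e i0⟫ ^ (2 * m) := by
        funext ω; rw [Finset.sum_mul]
      rw [h3]
      exact integral_finset_sum _ fun i _ => hint (e i) (e i0) 2 (2 * m)
    have hterm0 : ∫ ω, ⟪ω, e i0⟫ ^ 2 * ⟪ω, e i0⟫ ^ (2 * m) ∂σ = M (m + 1) := by
      have : ∀ ω : EuclideanSpace ℝ (Fin n),
          ⟪ω, e i0⟫ ^ 2 * ⟪ω, e i0⟫ ^ (2 * m) = ⟪ω, e i0⟫ ^ (2 * (m + 1)) := by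
        intro ω; rw [← pow_add]; congr 1; omega
      rw [hM]
      simp only [this]
    have htermi : ∀ i : Fin n, i ≠ i0 →
        (2 * (m : ℝ) + 1) * ∫ ω, ⟪ω, e i⟫ ^ 2 * ⟪ω, e i0⟫ ^ (2 * m) ∂σ = M (m + 1) := by
      intro i hi
      have := cub_mixed_moment σ hsupp hinv m (e i0) (e i) (he i0) (he i) (horth i hi)
      rw [this]
    have step2 : (2 * (m : ℝ) + 1) * M m
        = (2 * (m : ℝ) + 1) * M (m + 1) + ((n : ℝ) - 1) * M (m + 1) := by
      rw [step1, Finset.mul_sum, ← Finset.add_sum_erase _ _ (Finset.mem_univ i0)]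
      congr 1
      · rw [hterm0]
      · rw [Finset.sum_congr rfl fun i hi => htermi i (Finset.ne_of_mem_erase hi)]
        rw [Finset.sum_const, Finset.card_erase_of_mem (Finset.mem_univ i0), Finset.card_univ,
          Fintype.card_fin]
        rw [nsmul_eq_mul]
        congr 1
        push_cast [Nat.cast_sub (by omega : 1 ≤ n)]
        ring
    rw [step2]; ring
  have hMl : ∀ m : ℕ, M m = ∏ j ∈ Finset.range m, ((2 * (j : ℝ) + 1) / ((n : ℝ) + 2 * j)) := by
    intro m
    induction m with
    | zero => simpa using hM0
    | succ k ih =>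
      have hpos : (0 : ℝ) < (n : ℝ) + 2 * k := by positivity
      rw [Finset.prod_range_succ, ← ih]
      have := hrec k
      field_simp
      linarith [this]
  rw [hMa l u, hMl l]

lemma cub_coe_equivFun_symm {α : Type*} [Finite α] (f : α → ℕ) :
    ⇑(Finsupp.equivFunOnFinite.symm f) = f := rfl

lemma cub_monomial_form (a : ℝ) (d : Fin n → ℕ) :
    (MvPolynomial.C a * ∏ i : Fin n, MvPolynomial.X i ^ d i : MvPolynomial (Fin n) ℝ)
      = MvPolynomial.monomial (Finsupp.equivFunOnFinite.symm d) a := by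
  rw [MvPolynomial.monomial_eq, Finsupp.prod_fintype _ _ (fun i => pow_zero _)]
  simp [cub_coe_equivFun_symm]

lemma cub_expand_linpow (D : ℕ) (b : Fin n → ℝ) :
    ((∑ i : Fin n, MvPolynomial.C (b i) * MvPolynomial.X i : MvPolynomial (Fin n) ℝ)) ^ D
      = ∑ d ∈ Finset.piAntidiag (Finset.univ : Finset (Fin n)) D,
          MvPolynomial.C ((Nat.multinomial Finset.univ d : ℝ) * ∏ i : Fin n, b i ^ d i)
            * ∏ i : Fin n, MvPolynomial.X i ^ d i := by
  rw [Finset.sum_pow_eq_sum_piAntidiag]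
  refine Finset.sum_congr rfl fun d hd => ?_
  have h1 : ∏ i : Fin n, (MvPolynomial.C (b i) * MvPolynomial.X i) ^ d i
      = MvPolynomial.C (∏ i : Fin n, b i ^ d i) * ∏ i : Fin n, MvPolynomial.X i ^ d i := by
    rw [map_prod, ← Finset.prod_mul_distrib]
    exact Finset.prod_congr rfl fun i _ => by rw [mul_pow, map_pow]
  rw [h1, map_mul, ← map_natCast (MvPolynomial.C : ℝ →+* MvPolynomial (Fin n) ℝ)
    (Nat.multinomial Finset.univ d)]
  ring

lemma cub_coeff_extract (D : ℕ) (f g : (Fin n → ℕ) → ℝ)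
    (h : (∑ d ∈ Finset.piAntidiag (Finset.univ : Finset (Fin n)) D,
            MvPolynomial.C (f d) * ∏ i : Fin n, MvPolynomial.X i ^ d i : MvPolynomial (Fin n) ℝ)
       = ∑ d ∈ Finset.piAntidiag (Finset.univ : Finset (Fin n)) D,
            MvPolynomial.C (g d) * ∏ i : Fin n, MvPolynomial.X i ^ d i)
    (d : Fin n → ℕ) (hd : d ∈ Finset.piAntidiag (Finset.univ : Finset (Fin n)) D) :
    f d = g d := by
  have hinj : Function.Injective
      (fun d' : Fin n → ℕ => Finsupp.equivFunOnFinite.symm d') :=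
    fun a b hab => Finsupp.equivFunOnFinite.symm.injective hab
  have key : ∀ F : (Fin n → ℕ) → ℝ,
      MvPolynomial.coeff (Finsupp.equivFunOnFinite.symm d)
        (∑ d' ∈ Finset.piAntidiag (Finset.univ : Finset (Fin n)) D,
          MvPolynomial.C (F d') * ∏ i : Fin n, MvPolynomial.X i ^ d' i) = F d := by
    intro F
    simp only [cub_monomial_form]
    rw [MvPolynomial.coeff_sum]
    rw [Finset.sum_eq_single d]
    · rw [MvPolynomial.coeff_monomial, if_pos rfl]
    · intro d' _ hne
      rw [MvPolynomial.coeff_monomial, if_neg (fun hc => hne (hinj hc))]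
    · intro hc; exact absurd hd hc
  have := congrArg (MvPolynomial.coeff (Finsupp.equivFunOnFinite.symm d)) h
  rwa [key f, key g] at this

lemma cub_homog_sum_univ {D : ℕ} {p : MvPolynomial (Fin n) ℝ} (h : p.IsHomogeneous D)
    {d : Fin n →₀ ℕ} (hd : d ∈ p.support) :
    (Finset.univ : Finset (Fin n)).sum ⇑d = D := by
  have h1 := h (MvPolynomial.mem_support_iff.mp hd)
  rw [← h1, Pi.one_def, ← Finsupp.degree_eq_weight_one, Finsupp.degree]
  exact (Finset.sum_subset (Finset.subset_univ _)
    (fun i _ hi => Finsupp.notMem_support_iff.mp hi)).symm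

lemma cub_rpow_pow {x : ℝ} (hx : 0 ≤ x) {l : ℕ} (hl : l ≠ 0) :
    (x ^ ((1 : ℝ) / (2 * (l : ℝ)))) ^ (2 * l) = x := by
  have hlp : (0 : ℝ) < 2 * (l : ℝ) := by
    have : (0 : ℝ) < l := by exact_mod_cast Nat.pos_of_ne_zero hl
    linarith
  rw [← Real.rpow_natCast (x ^ ((1 : ℝ) / (2 * (l : ℝ)))) (2 * l), ← Real.rpow_mul hx]
  push_cast
  rw [one_div, inv_mul_cancel₀ (ne_of_gt hlp), Real.rpow_one]

lemma cub_pow_rpow {x : ℝ} (hx : 0 ≤ x) {l : ℕ} (hl : l ≠ 0) :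
    ((x ^ (2 * l) : ℝ)) ^ ((1 : ℝ) / (2 * (l : ℝ))) = x := by
  have hlp : (0 : ℝ) < 2 * (l : ℝ) := by
    have : (0 : ℝ) < l := by exact_mod_cast Nat.pos_of_ne_zero hl
    linarith
  rw [← Real.rpow_natCast x (2 * l), ← Real.rpow_mul hx]
  push_cast
  rw [mul_one_div, div_self (ne_of_gt hlp), Real.rpow_one]

lemma cub_inner_coords (x y : EuclideanSpace ℝ (Fin n)) : ⟪x, y⟫ = ∑ i, x i * y i := by
  simp [PiLp.inner_apply, RCLike.inner_apply]
  exact Finset.sum_congr rfl fun i _ => mul_comm _ _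

lemma cub_continuous_coord (i : Fin n) :
    Continuous fun ω : EuclideanSpace ℝ (Fin n) => ω i :=
  (continuous_apply i).comp (PiLp.continuous_ofLp 2 fun _ : Fin n => ℝ)

lemma cub_eval_linpow (D : ℕ) (b v : Fin n → ℝ) :
    MvPolynomial.eval v
        ((∑ i : Fin n, MvPolynomial.C (b i) * MvPolynomial.X i : MvPolynomial (Fin n) ℝ) ^ D)
      = (∑ i : Fin n, b i * v i) ^ D := by
  rw [map_pow, map_sum]
  simp

lemma cub_linpow_homog (D : ℕ) (b : Fin n → ℝ) :
    ((∑ i : Fin n, MvPolynomial.C (b i) * MvPolynomial.X i : MvPolynomial (Fin n) ℝ) ^ D).IsHomogeneous D := by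
  have h1 : (∑ i : Fin n, MvPolynomial.C (b i) * MvPolynomial.X i
      : MvPolynomial (Fin n) ℝ).IsHomogeneous 1 :=
    MvPolynomial.IsHomogeneous.sum _ _ _ fun i _ =>
      (zero_add 1) ▸ ((MvPolynomial.isHomogeneous_C _ (b i)).mul (MvPolynomial.isHomogeneous_X _ i))
  simpa using h1.pow D

lemma cub_sum_single (u : EuclideanSpace ℝ (Fin n)) :
    u = ∑ i, u i • EuclideanSpace.single i (1 : ℝ) := by
  have := (EuclideanSpace.basisFun (Fin n) ℝ).sum_repr u
  simp [EuclideanSpace.basisFun_repr, EuclideanSpace.basisFun_apply] at this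
  exact this.symm

lemma cub_normal_sum {N : ℕ} (w : Fin N → ℝ) (y : Fin N → Fin n → ℝ) (D : ℕ) :
    (∑ k : Fin N, MvPolynomial.C (w k)
        * (∑ i : Fin n, MvPolynomial.C (y k i) * MvPolynomial.X i) ^ D
      : MvPolynomial (Fin n) ℝ)
      = ∑ d ∈ Finset.piAntidiag (Finset.univ : Finset (Fin n)) D,
          MvPolynomial.C ((Nat.multinomial Finset.univ d : ℝ)
              * ∑ k : Fin N, w k * ∏ i : Fin n, y k i ^ d i)
            * ∏ i : Fin n, MvPolynomial.X i ^ d i := by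
  simp_rw [cub_expand_linpow, Finset.mul_sum]
  rw [Finset.sum_comm]
  refine Finset.sum_congr rfl fun d hd => ?_
  simp_rw [← mul_assoc, ← map_mul]
  rw [← Finset.sum_mul, ← map_sum]
  congr 1
  exact congrArg MvPolynomial.C (Finset.sum_congr rfl fun k _ => by ring)

end CubAux

/-- correspondence between cubature formulas of size `N` for
`P^{(2l)}(𝕊^{n-1})` and nondegenerate isometric embeddings `ℓ²(n) → ℓ^{2l}(N)`. -/
theorem cubature_iff_isometric_embedding
    (n l N : ℕ) (hn : 2 ≤ n) (hl : 2 ≤ l) (hN : 1 ≤ N)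
    (σ : Measure (EuclideanSpace ℝ (Fin n))) [IsProbabilityMeasure σ]
    (hsupp : σ (Metric.sphere (0 : EuclideanSpace ℝ (Fin n)) 1)ᶜ = 0)
    (hinv : ∀ g : EuclideanSpace ℝ (Fin n) ≃ₗᵢ[ℝ] EuclideanSpace ℝ (Fin n),
      MeasurePreserving g σ σ)
    (c : ℝ)
    (hc : c = ∏ j ∈ Finset.range l, ((2 * (j : ℝ) + 1) / ((n : ℝ) + 2 * j))) :
    -- (i) a cubature formula for `P^{(2l)}` yields a nondegenerate isometric embedding
    (∀ (x : Fin N → EuclideanSpace ℝ (Fin n)),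
      (∀ k, x k ∈ Metric.sphere (0 : EuclideanSpace ℝ (Fin n)) 1) →
      ∀ (W : Fin N → ℝ), (∀ k, 0 < W k) →
      (∀ p : MvPolynomial (Fin n) ℝ, p.IsHomogeneous (2 * l) →
        ∑ k : Fin N, W k * MvPolynomial.eval (fun i => x k i) p
          = ∫ ω, MvPolynomial.eval (fun i => ω i) p ∂σ) →
      ((∀ u : EuclideanSpace ℝ (Fin n),
          (∑ k : Fin N, |(W k / c) ^ ((1 : ℝ) / (2 * l)) * ⟪x k, u⟫| ^ (2 * l))
              ^ ((1 : ℝ) / (2 * l)) = ‖u‖) ∧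
        (∀ k : Fin N, ∃ u : EuclideanSpace ℝ (Fin n),
          (W k / c) ^ ((1 : ℝ) / (2 * l)) * ⟪x k, u⟫ ≠ 0))) ∧
    -- (ii) a nondegenerate isometric embedding yields a cubature formula for `P^{(2l)}`
    (∀ J : EuclideanSpace ℝ (Fin n) →ₗ[ℝ] (Fin N → ℝ),
      (∀ u : EuclideanSpace ℝ (Fin n),
        (∑ k : Fin N, |J u k| ^ (2 * l)) ^ ((1 : ℝ) / (2 * l)) = ‖u‖) →
      (∀ k : Fin N, ∃ u : EuclideanSpace ℝ (Fin n), J u k ≠ 0) →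
      ∃ (x : Fin N → EuclideanSpace ℝ (Fin n)) (W : Fin N → ℝ),
        (∀ k, x k ∈ Metric.sphere (0 : EuclideanSpace ℝ (Fin n)) 1) ∧
        (∀ k, 0 < W k) ∧
        (∀ p : MvPolynomial (Fin n) ℝ, p.IsHomogeneous (2 * l) →
          ∑ k : Fin N, W k * MvPolynomial.eval (fun i => x k i) p
            = ∫ ω, MvPolynomial.eval (fun i => ω i) p ∂σ)) := by
  have hl0 : l ≠ 0 := by omega
  have hcpos : 0 < c := by
    rw [hc]
    refine Finset.prod_pos fun j hj => ?_
    have hn0 : (0 : ℝ) < n := by exact_mod_cast (by omega : 0 < n)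
    positivity
  have hmoment : ∀ u : EuclideanSpace ℝ (Fin n),
      ∫ ω, ⟪ω, u⟫ ^ (2 * l) ∂σ = c * ‖u‖ ^ (2 * l) := by
    intro u
    rw [cub_moment_formula hn σ hsupp hinv l u, hc]
  constructor
  · -- part (i)
    intro x hx W hW hcub
    constructor
    · intro u
      have hhom := cub_linpow_homog (n := n) (2 * l) (fun i => u i)
      have hkey : ∑ k, W k * ⟪x k, u⟫ ^ (2 * l) = c * ‖u‖ ^ (2 * l) := by
        have h1 := hcub _ hhom
        have h2 : ∀ k, MvPolynomial.eval (fun i => x k i)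
            ((∑ i : Fin n, MvPolynomial.C (u i) * MvPolynomial.X i) ^ (2 * l))
            = ⟪x k, u⟫ ^ (2 * l) := by
          intro k
          rw [cub_eval_linpow, cub_inner_coords]
          congr 1
          exact Finset.sum_congr rfl fun i _ => mul_comm _ _
        have h3 : ∀ ω : EuclideanSpace ℝ (Fin n), MvPolynomial.eval (fun i => ω i)
            ((∑ i : Fin n, MvPolynomial.C (u i) * MvPolynomial.X i) ^ (2 * l))
            = ⟪ω, u⟫ ^ (2 * l) := by
          intro ω
          rw [cub_eval_linpow, cub_inner_coords]
          congr 1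
          exact Finset.sum_congr rfl fun i _ => mul_comm _ _
        calc ∑ k, W k * ⟪x k, u⟫ ^ (2 * l)
            = ∑ k, W k * MvPolynomial.eval (fun i => x k i)
                ((∑ i : Fin n, MvPolynomial.C (u i) * MvPolynomial.X i) ^ (2 * l)) := by
              exact Finset.sum_congr rfl fun k _ => by rw [h2 k]
          _ = ∫ ω, MvPolynomial.eval (fun i => ω i)
                ((∑ i : Fin n, MvPolynomial.C (u i) * MvPolynomial.X i) ^ (2 * l)) ∂σ := h1
          _ = ∫ ω, ⟪ω, u⟫ ^ (2 * l) ∂σ := by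
              congr 1; funext ω; rw [h3 ω]
          _ = c * ‖u‖ ^ (2 * l) := hmoment u
      have hsum : ∑ k, |(W k / c) ^ ((1 : ℝ) / (2 * l)) * ⟪x k, u⟫| ^ (2 * l)
          = ‖u‖ ^ (2 * l) := by
        have hterm : ∀ k, |(W k / c) ^ ((1 : ℝ) / (2 * l)) * ⟪x k, u⟫| ^ (2 * l)
            = (W k / c) * ⟪x k, u⟫ ^ (2 * l) := by
          intro k
          have hwc : (0 : ℝ) ≤ W k / c := le_of_lt (div_pos (hW k) hcpos)
          rw [abs_mul, mul_pow, abs_of_nonneg (Real.rpow_nonneg hwc _),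
            cub_rpow_pow hwc hl0, Even.pow_abs (even_two_mul l)]
        rw [Finset.sum_congr rfl fun k _ => hterm k]
        have h4 : ∑ k, W k / c * ⟪x k, u⟫ ^ (2 * l)
            = (∑ k, W k * ⟪x k, u⟫ ^ (2 * l)) / c := by
          rw [Finset.sum_div]
          exact Finset.sum_congr rfl fun k _ => div_mul_eq_mul_div _ _ _
        rw [h4, hkey, mul_div_cancel_left₀ _ (ne_of_gt hcpos)]
      rw [hsum, cub_pow_rpow (norm_nonneg u) hl0]
    · intro k
      refine ⟨x k, ?_⟩
      have h2 : ‖x k‖ = 1 := by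
        simpa [Metric.mem_sphere, dist_zero_right] using hx k
      have h1 : ⟪x k, x k⟫ = 1 := by
        rw [real_inner_self_eq_norm_sq, h2]; norm_num
      rw [h1, mul_one]
      exact ne_of_gt (Real.rpow_pos_of_pos (div_pos (hW k) hcpos) _)
  · -- part (ii)
    intro J hiso hnd
    set a : Fin N → EuclideanSpace ℝ (Fin n) :=
      fun k => (WithLp.equiv 2 (Fin n → ℝ)).symm (fun i => J (EuclideanSpace.single i 1) k)
      with ha
    have haco : ∀ k i, a k i = J (EuclideanSpace.single i 1) k := fun k i => rfl
    have hJa : ∀ (u : EuclideanSpace ℝ (Fin n)) (k : Fin N), J u k = ⟪a k, u⟫ := by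
      intro u k
      conv_lhs => rw [cub_sum_single u]
      rw [map_sum, Finset.sum_apply, cub_inner_coords]
      refine Finset.sum_congr rfl fun i _ => ?_
      rw [J.map_smul]
      simp only [Pi.smul_apply, smul_eq_mul, haco]
      ring
    have hS : ∀ u : EuclideanSpace ℝ (Fin n),
        ∑ k, ⟪a k, u⟫ ^ (2 * l) = ‖u‖ ^ (2 * l) := by
      intro u
      have hsnn : 0 ≤ ∑ k, |J u k| ^ (2 * l) :=
        Finset.sum_nonneg fun k _ => pow_nonneg (abs_nonneg _) _
      have h2 : ∑ k, |J u k| ^ (2 * l) = ‖u‖ ^ (2 * l) := by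
        rw [← cub_rpow_pow hsnn hl0, hiso u]
      calc ∑ k, ⟪a k, u⟫ ^ (2 * l) = ∑ k, |J u k| ^ (2 * l) := by
            refine Finset.sum_congr rfl fun k _ => ?_
            rw [hJa u k, Even.pow_abs (even_two_mul l)]
        _ = ‖u‖ ^ (2 * l) := h2
    have hanz : ∀ k, a k ≠ 0 := by
      intro k hk
      obtain ⟨u, hu⟩ := hnd k
      exact hu (by rw [hJa u k, hk, inner_zero_left])
    refine ⟨fun k => ‖a k‖⁻¹ • a k, fun k => c * ‖a k‖ ^ (2 * l), ?_, ?_, ?_⟩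
    · intro k
      rw [Metric.mem_sphere, dist_zero_right, norm_smul, norm_inv, norm_norm,
        inv_mul_cancel₀ (norm_ne_zero_iff.mpr (hanz k))]
    · intro k
      exact mul_pos hcpos (pow_pos (norm_pos_iff.mpr (hanz k)) _)
    · intro p hp
      set x : Fin N → EuclideanSpace ℝ (Fin n) := fun k => ‖a k‖⁻¹ • a k with hxdef
      set W : Fin N → ℝ := fun k => c * ‖a k‖ ^ (2 * l) with hWdef
      have hint : ∀ d : Fin n → ℕ,
          Integrable (fun ω : EuclideanSpace ℝ (Fin n) => ∏ i, (ω i) ^ (d i)) σ :=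
        fun d => cub_integrable_cont σ hsupp
          (continuous_finset_prod _ fun i _ => (cub_continuous_coord i).pow _)
      have hkey : ∀ v : Fin n → ℝ,
          ∑ k, W k * (∑ i, x k i * v i) ^ (2 * l)
            = ∫ ω, (∑ i, ω i * v i) ^ (2 * l) ∂σ := by
        intro v
        set v' : EuclideanSpace ℝ (Fin n) := (WithLp.equiv 2 (Fin n → ℝ)).symm v with hv'
        have hv'c : ∀ i, v' i = v i := fun i => rfl
        have h1 : ∀ k : Fin N, (∑ i, x k i * v i) = ⟪x k, v'⟫ := by
          intro k
          rw [cub_inner_coords]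
          exact Finset.sum_congr rfl fun i _ => by rw [hv'c]
        have h2 : ∀ ω : EuclideanSpace ℝ (Fin n), (∑ i, ω i * v i) = ⟪ω, v'⟫ := by
          intro ω
          rw [cub_inner_coords]
          exact Finset.sum_congr rfl fun i _ => by rw [hv'c]
        calc ∑ k, W k * (∑ i, x k i * v i) ^ (2 * l)
            = ∑ k, c * ⟪a k, v'⟫ ^ (2 * l) := by
              refine Finset.sum_congr rfl fun k _ => ?_
              rw [h1 k, hWdef, hxdef]
              simp only
              rw [real_inner_smul_left, mul_pow, inv_pow]
              have hnz : ‖a k‖ ^ (2 * l) ≠ 0 :=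
                pow_ne_zero _ (norm_ne_zero_iff.mpr (hanz k))
              field_simp
          _ = c * ‖v'‖ ^ (2 * l) := by rw [← Finset.mul_sum, hS v']
          _ = ∫ ω, ⟪ω, v'⟫ ^ (2 * l) ∂σ := (hmoment v').symm
          _ = ∫ ω, (∑ i, ω i * v i) ^ (2 * l) ∂σ := by
              refine integral_congr_ae (Filter.Eventually.of_forall fun ω => ?_)
              show ⟪ω, v'⟫ ^ (2 * l) = (∑ i, ω i * v i) ^ (2 * l)
              rw [h2 ω]
      have hmom : ∀ d : Fin n → ℕ,
          d ∈ Finset.piAntidiag (Finset.univ : Finset (Fin n)) (2 * l) →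
          ∑ k, W k * ∏ i, (x k i) ^ (d i) = ∫ ω, ∏ i, (ω i) ^ (d i) ∂σ := by
        have hPQ : (∑ d ∈ Finset.piAntidiag (Finset.univ : Finset (Fin n)) (2 * l),
              MvPolynomial.C ((Nat.multinomial Finset.univ d : ℝ)
                  * ∑ k, W k * ∏ i, (x k i) ^ (d i))
                * ∏ i : Fin n, MvPolynomial.X i ^ d i : MvPolynomial (Fin n) ℝ)
            = ∑ d ∈ Finset.piAntidiag (Finset.univ : Finset (Fin n)) (2 * l),
              MvPolynomial.C ((Nat.multinomial Finset.univ d : ℝ)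
                  * ∫ ω, ∏ i, (ω i) ^ (d i) ∂σ)
                * ∏ i : Fin n, MvPolynomial.X i ^ d i := by
          apply MvPolynomial.funext
          intro v
          rw [← cub_normal_sum W (fun k i => x k i) (2 * l)]
          have e1 : MvPolynomial.eval v (∑ k : Fin N, MvPolynomial.C (W k)
              * (∑ i : Fin n, MvPolynomial.C (x k i) * MvPolynomial.X i) ^ (2 * l))
              = ∑ k, W k * (∑ i, x k i * v i) ^ (2 * l) := by
            rw [map_sum]
            refine Finset.sum_congr rfl fun k _ => ?_
            rw [map_mul, MvPolynomial.eval_C, cub_eval_linpow]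
          have e2 : MvPolynomial.eval v
              (∑ d ∈ Finset.piAntidiag (Finset.univ : Finset (Fin n)) (2 * l),
                MvPolynomial.C ((Nat.multinomial Finset.univ d : ℝ)
                    * ∫ ω, ∏ i, (ω i) ^ (d i) ∂σ)
                  * ∏ i : Fin n, MvPolynomial.X i ^ d i)
              = ∫ ω, (∑ i, ω i * v i) ^ (2 * l) ∂σ := by
            rw [map_sum]
            have e3 : ∀ d ∈ Finset.piAntidiag (Finset.univ : Finset (Fin n)) (2 * l),
                MvPolynomial.eval v (MvPolynomial.C ((Nat.multinomial Finset.univ d : ℝ)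
                    * ∫ ω, ∏ i, (ω i) ^ (d i) ∂σ)
                  * ∏ i : Fin n, MvPolynomial.X i ^ d i)
                = ∫ ω, (Nat.multinomial Finset.univ d : ℝ) * ∏ i, (ω i * v i) ^ (d i) ∂σ := by
              intro d hd
              rw [map_mul, MvPolynomial.eval_C]
              have e4 : MvPolynomial.eval v (∏ i : Fin n, MvPolynomial.X i ^ d i)
                  = ∏ i, (v i) ^ (d i) := by
                rw [map_prod]
                exact Finset.prod_congr rfl fun i _ => by
                  rw [map_pow, MvPolynomial.eval_X]
              rw [e4]
              have e5 : ∀ ω : EuclideanSpace ℝ (Fin n),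
                  (Nat.multinomial Finset.univ d : ℝ) * ∏ i, (ω i * v i) ^ (d i)
                  = ((Nat.multinomial Finset.univ d : ℝ)
                      * ∏ i, (ω i) ^ (d i)) * ∏ i, (v i) ^ (d i) := by
                intro ω
                rw [mul_assoc, ← Finset.prod_mul_distrib]
                congr 1
                exact Finset.prod_congr rfl fun i _ => (mul_pow _ _ _)
              rw [MeasureTheory.integral_congr_ae (Filter.Eventually.of_forall e5)]
              rw [integral_mul_const, integral_const_mul]
            rw [Finset.sum_congr rfl e3, ← integral_finset_sum]
            · congr 1
              funext ω
              rw [← Finset.sum_pow_eq_sum_piAntidiag]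
            · intro d _
              refine Integrable.const_mul ?_ _
              exact cub_integrable_cont σ hsupp
                (continuous_finset_prod _ fun i _ =>
                  ((cub_continuous_coord i).mul continuous_const).pow _)
          rw [e1, e2]
          exact hkey v
        intro d hd
        have h6 := cub_coeff_extract (2 * l) _ _ hPQ d hd
        have hmnz : ((Nat.multinomial Finset.univ d : ℕ) : ℝ) ≠ 0 :=
          Nat.cast_ne_zero.mpr (Nat.multinomial_pos Finset.univ d).ne'
        exact mul_left_cancel₀ hmnz h6
      calc ∑ k, W k * MvPolynomial.eval (fun i => x k i) p
          = ∑ k, W k * ∑ d ∈ p.support, MvPolynomial.coeff d p * ∏ i, (x k i) ^ (d i) := by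
            exact Finset.sum_congr rfl fun k _ => by rw [MvPolynomial.eval_eq']
        _ = ∑ d ∈ p.support, MvPolynomial.coeff d p * ∑ k, W k * ∏ i, (x k i) ^ (d i) := by
            simp_rw [Finset.mul_sum]
            rw [Finset.sum_comm]
            refine Finset.sum_congr rfl fun d _ => Finset.sum_congr rfl fun k _ => by ring
        _ = ∑ d ∈ p.support, MvPolynomial.coeff d p * ∫ ω, ∏ i, (ω i) ^ (d i) ∂σ := by
            refine Finset.sum_congr rfl fun d hd => ?_
            rw [hmom (fun i => d i) (Finset.mem_piAntidiag.mpr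
              ⟨cub_homog_sum_univ hp hd, fun i _ => Finset.mem_univ i⟩)]
        _ = ∑ d ∈ p.support, ∫ ω, MvPolynomial.coeff d p * ∏ i, (ω i) ^ (d i) ∂σ := by
            exact Finset.sum_congr rfl fun d _ => (integral_const_mul _ _).symm
        _ = ∫ ω, ∑ d ∈ p.support, MvPolynomial.coeff d p * ∏ i, (ω i) ^ (d i) ∂σ := by
            exact (integral_finset_sum (μ := σ) p.support
              (f := fun (d : Fin n →₀ ℕ) (ω : EuclideanSpace ℝ (Fin n)) =>
                MvPolynomial.coeff d p * ∏ i, (ω i) ^ (d i))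
              (fun d _ => (hint fun i => d i).const_mul _)).symm
        _ = ∫ ω, MvPolynomial.eval (fun i => ω i) p ∂σ := by
            congr 1
            funext ω
            rw [MvPolynomial.eval_eq']
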